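/- arXiv:1805.02886 — 2 statements merged into one kernel-verified Lean document; each statement's English description precedes it below -/
import Mathlib

section
/- For integers n and k with n ≥ k + 3 ≥ 3, there exists a connected graph G of order n with χ_la(G) = n − k; specifically, the coconut tree CT(k+2, n−k−2) has order n and local antimagic chromatic number n − k. -/
open scoped BigOperators

/-- The induced vertex sum: sum of labels of edges incident to `v`. -/
noncomputable def vertexSum {V : Type*} (G : SimpleGraph V) (f : Sym2 V → ℕ) (v : V) : ℕ :=
  ∑ᶠ e ∈ G.incidenceSet v, f e

/-- `f` is a local antimagic labeling of `G`: a bijection from the edge set onto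
`{1, …, |E(G)|}` such that adjacent vertices get distinct induced sums. -/
def IsLocalAntimagic {V : Type*} (G : SimpleGraph V) (f : Sym2 V → ℕ) : Prop :=
  Set.BijOn f G.edgeSet (Set.Icc 1 G.edgeSet.ncard) ∧
  ∀ u v, G.Adj u v → vertexSum G f u ≠ vertexSum G f v

/-- Number of distinct induced vertex labels of the labeling `f`. -/
noncomputable def colorCount {V : Type*} (G : SimpleGraph V) (f : Sym2 V → ℕ) : ℕ :=
  (Set.range (vertexSum G f)).ncard

/-- The local antimagic chromatic number. -/
noncomputable def chiLA {V : Type*} (G : SimpleGraph V) : ℕ :=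
  sInf { n | ∃ f, IsLocalAntimagic G f ∧ colorCount G f = n }

/-- The join `G ∨ Oₙ` of `G` with the empty graph on `n` vertices. -/
def joinEmpty {V : Type*} (G : SimpleGraph V) (n : ℕ) : SimpleGraph (V ⊕ Fin n) :=
  SimpleGraph.fromRel (fun x y =>
    (∃ a b, x = Sum.inl a ∧ y = Sum.inl b ∧ G.Adj a b) ∨ (x.isLeft ∧ y.isRight))

/-- The coconut tree `CT(m,t)`: a path `v₀ … v_{m-1}` with `t` extra leaves attached
to the end-vertex `v_{m-1}`. -/
def coconutTree (m t : ℕ) : SimpleGraph (Fin m ⊕ Fin t) :=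
  SimpleGraph.fromRel (fun x y =>
    (∃ a b : Fin m, x = Sum.inl a ∧ y = Sum.inl b ∧ (b : ℕ) = (a : ℕ) + 1) ∨
    (∃ (a : Fin m) (j : Fin t), x = Sum.inl a ∧ y = Sum.inr j ∧ (a : ℕ) = m - 1))

/-!
Number the vertices of `CT(p + 1, t)` as `v₀, …, v_p` along the path, `v_p` being the centre,
followed by the `t` leaves. Labelling the path edges `p, 1, p - 1, 2, …` from `v₀` and the pendant
edges `p + 1, …, p + t` makes the path sums alternate between `p` and `p + 1`, the leaf sums run
through `p + 1, …, p + t`, and the centre sum exceed them all: `t + 2` colours.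

Conversely, for any local antimagic labelling the `t` leaf sums are distinct edge labels, each
smaller than the centre sum, and the sum at `v₀` is yet another edge label. If it equals the centre
sum then `p ≥ 2` (otherwise `v₀` is adjacent to the centre), and the sum at `v₁` exceeds it. Either
way at least `t + 2` colours occur.
-/

open Function Set Sum SimpleGraph

section LocalAntimagic

variable {V W : Type*} {G : SimpleGraph V} {H : SimpleGraph W} {f : Sym2 V → ℕ}

lemma SimpleGraph.incidenceSet_eq_image_neighborSet (v : V) :
    G.incidenceSet v = (fun w => s(v, w)) '' G.neighborSet v := by
  ext e
  induction e using Sym2.ind with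
  | h x y =>
    rw [mk'_mem_incidenceSet_iff]
    constructor
    · rintro ⟨hxy, rfl | rfl⟩
      exacts [⟨y, hxy, rfl⟩, ⟨x, hxy.symm, Sym2.eq_swap⟩]
    · rintro ⟨w, hw, hvw⟩
      obtain ⟨rfl, rfl⟩ | ⟨rfl, rfl⟩ := Sym2.eq_iff.1 hvw
      exacts [⟨hw, .inl rfl⟩, ⟨hw.symm, .inr rfl⟩]

lemma vertexSum_eq_finsum_neighborSet (f : Sym2 V → ℕ) (v : V) :
    vertexSum G f v = ∑ᶠ w ∈ G.neighborSet v, f s(v, w) := by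
  rw [vertexSum, G.incidenceSet_eq_image_neighborSet,
    finsum_mem_image fun _ _ _ _ h => Sym2.congr_right.1 h]

lemma vertexSum_of_neighborSet_eq_singleton {v w : V} (h : G.neighborSet v = {w}) :
    vertexSum G f v = f s(v, w) := by
  rw [vertexSum_eq_finsum_neighborSet, h, finsum_mem_singleton]

lemma vertexSum_of_neighborSet_eq_pair {v w w' : V} (hne : w ≠ w')
    (h : G.neighborSet v = {w, w'}) : vertexSum G f v = f s(v, w) + f s(v, w') := by
  rw [vertexSum_eq_finsum_neighborSet, h, finsum_mem_pair hne]

lemma lt_vertexSum [Finite V] {v w w' : V} (hw : G.Adj v w) (hw' : G.Adj v w') (hne : w ≠ w')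
    (hpos : 0 < f s(v, w')) : f s(v, w) < vertexSum G f v := by
  rw [vertexSum_eq_finsum_neighborSet,
    ← finsum_mem_inter_add_sdiff {w, w'} (G.neighborSet v).toFinite,
    inter_eq_right.2 (pair_subset (s := G.neighborSet v) hw hw'), finsum_mem_pair hne]
  omega

lemma IsLocalAntimagic.pos (hf : IsLocalAntimagic G f) {e : Sym2 V} (he : e ∈ G.edgeSet) :
    0 < f e :=
  (hf.1.mapsTo he).1

lemma add_two_le_colorCount [Finite V] {t : ℕ} (u : Fin t → V)
    (hu : Injective (vertexSum G f ∘ u)) (a b : V)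
    (ha : ∀ j, vertexSum G f a ≠ vertexSum G f (u j))
    (hb : ∀ j, vertexSum G f b ≠ vertexSum G f (u j))
    (hab : vertexSum G f a ≠ vertexSum G f b) : t + 2 ≤ colorCount G f := by
  classical
  set σ := vertexSum G f
  let S : Finset ℕ := insert (σ a) (insert (σ b) (Finset.univ.image (σ ∘ u)))
  have hS : S.card = t + 2 := by
    rw [Finset.card_insert_of_notMem, Finset.card_insert_of_notMem,
      Finset.card_image_of_injective _ hu, Finset.card_univ, Fintype.card_fin]
    · simpa using fun j => (hb j).symm
    · simpa [hab] using fun j => (ha j).symm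
  have hsub : (S : Set ℕ) ⊆ range σ := by
    simp only [S, Finset.coe_insert, Finset.coe_image, Finset.coe_univ, image_univ]
    exact insert_subset (mem_range_self a) <| insert_subset (mem_range_self b) <|
      range_comp_subset_range u σ
  rw [← hS, ← ncard_coe_finset]
  exact ncard_le_ncard hsub (finite_range σ)

lemma SimpleGraph.Iso.vertexSum_comp (φ : G ≃g H) (f : Sym2 W → ℕ) (v : V) :
    vertexSum G (f ∘ Sym2.map φ) v = vertexSum H f (φ v) := by
  rw [vertexSum_eq_finsum_neighborSet, vertexSum_eq_finsum_neighborSet, ← φ.image_neighborSet,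
    finsum_mem_image φ.injective.injOn]
  rfl

lemma SimpleGraph.Iso.bijOn_edgeSet (φ : G ≃g H) : BijOn (Sym2.map φ) G.edgeSet H.edgeSet :=
  ⟨fun _ => φ.map_mem_edgeSet_iff.2, (Sym2.map.injective φ.injective).injOn, fun z hz =>
    ⟨Sym2.map φ.symm z, φ.symm.map_mem_edgeSet_iff.2 hz, by simp [Sym2.map_map]⟩⟩

lemma IsLocalAntimagic.comp_iso {f : Sym2 W → ℕ} (hf : IsLocalAntimagic H f) (φ : G ≃g H) :
    IsLocalAntimagic G (f ∘ Sym2.map φ) := by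
  refine ⟨?_, fun u v huv => ?_⟩
  · rw [φ.bijOn_edgeSet.ncard_eq]
    exact hf.1.comp φ.bijOn_edgeSet
  · simpa only [φ.vertexSum_comp] using hf.2 _ _ (φ.map_adj_iff.2 huv)

lemma SimpleGraph.Iso.colorCount_comp (φ : G ≃g H) (f : Sym2 W → ℕ) :
    colorCount G (f ∘ Sym2.map φ) = colorCount H f := by
  rw [colorCount, colorCount, funext (φ.vertexSum_comp f)]
  exact congrArg ncard (φ.surjective.range_comp (vertexSum H f))

lemma SimpleGraph.Iso.chiLA_eq (φ : G ≃g H) : chiLA G = chiLA H := by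
  rw [chiLA, chiLA]
  congr 1
  ext n
  constructor
  · rintro ⟨f, hf, rfl⟩
    exact ⟨f ∘ Sym2.map φ.symm, IsLocalAntimagic.comp_iso hf φ.symm, φ.symm.colorCount_comp f⟩
  · rintro ⟨f, hf, rfl⟩
    exact ⟨f ∘ Sym2.map φ, IsLocalAntimagic.comp_iso hf φ, φ.colorCount_comp f⟩

lemma SimpleGraph.connected_of_exists_adj_lt (r : V) (ι : V → ℕ)
    (h : ∀ v ≠ r, ∃ u, G.Adj v u ∧ ι u < ι v) : G.Connected := by
  have reach : ∀ n, ∀ v, ι v = n → G.Reachable v r := by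
    intro n
    induction n using Nat.strong_induction_on with
    | _ n ih =>
      intro v hv
      by_cases hvr : v = r
      · exact hvr ▸ Reachable.refl v
      · obtain ⟨u, hvu, hu⟩ := h v hvr
        exact hvu.reachable.trans (ih _ (hv ▸ hu) u rfl)
  exact (connected_iff G).2 ⟨fun u v => (reach _ u rfl).trans (reach _ v rfl).symm, ⟨r⟩⟩

end LocalAntimagic

section CoconutTree

variable {p t : ℕ}

def coconutIndex (v : Fin (p + 1) ⊕ Fin t) : ℕ := finSumFinEquiv v

@[simp] lemma coconutIndex_inl (a : Fin (p + 1)) :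
    coconutIndex (inl a : Fin (p + 1) ⊕ Fin t) = a :=
  rfl

@[simp] lemma coconutIndex_inr (j : Fin t) :
    coconutIndex (inr j : Fin (p + 1) ⊕ Fin t) = p + 1 + j :=
  rfl

lemma coconutIndex_injective : Injective (coconutIndex : Fin (p + 1) ⊕ Fin t → ℕ) :=
  Fin.val_injective.comp finSumFinEquiv.injective

lemma coconutIndex_lt (v : Fin (p + 1) ⊕ Fin t) : coconutIndex v < p + 1 + t :=
  (finSumFinEquiv v).isLt

lemma eq_inl_last_of_coconutIndex_eq {v : Fin (p + 1) ⊕ Fin t} (hv : coconutIndex v = p) :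
    v = inl (Fin.last p) :=
  coconutIndex_injective (by simpa using hv)

lemma exists_coconutIndex_eq {k : ℕ} (hk : k < p + 1 + t) :
    ∃ v : Fin (p + 1) ⊕ Fin t, coconutIndex v = k :=
  ⟨finSumFinEquiv.symm ⟨k, hk⟩, by simp [coconutIndex]⟩

lemma coconutTree_adj_iff {x y : Fin (p + 1) ⊕ Fin t} :
    (coconutTree (p + 1) t).Adj x y ↔
      (coconutIndex y = coconutIndex x + 1 ∧ coconutIndex y ≤ p) ∨
      (coconutIndex x = coconutIndex y + 1 ∧ coconutIndex x ≤ p) ∨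
      (coconutIndex x = p ∧ p < coconutIndex y) ∨ (coconutIndex y = p ∧ p < coconutIndex x) := by
  rcases x with a | i <;> rcases y with b | j <;>
    simp [coconutTree] <;> (try simp only [← Fin.val_inj]) <;> omega

lemma coconutTree_neighborSet_inr (j : Fin t) :
    (coconutTree (p + 1) t).neighborSet (inr j) = {inl (Fin.last p)} := by
  ext w
  have := coconutIndex_lt w
  rw [mem_neighborSet, coconutTree_adj_iff, mem_singleton_iff, ← coconutIndex_injective.eq_iff]
  simp only [coconutIndex_inl, coconutIndex_inr, Fin.val_last]
  omega

lemma coconutTree_neighborSet_inl_zero (hp : 1 ≤ p) :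
    (coconutTree (p + 1) t).neighborSet (inl 0) = {inl ⟨1, by omega⟩} := by
  ext w
  have := coconutIndex_lt w
  rw [mem_neighborSet, coconutTree_adj_iff, mem_singleton_iff, ← coconutIndex_injective.eq_iff]
  simp only [coconutIndex_inl, Fin.val_zero]
  omega

lemma coconutTree_neighborSet_inl {c : ℕ} (h0 : 0 < c) (hc : c < p) :
    (coconutTree (p + 1) t).neighborSet (inl ⟨c, by omega⟩) =
      {inl ⟨c - 1, by omega⟩, inl ⟨c + 1, by omega⟩} := by
  ext w
  have := coconutIndex_lt w
  rw [mem_neighborSet, coconutTree_adj_iff, mem_insert_iff, mem_singleton_iff,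
    ← coconutIndex_injective.eq_iff, ← coconutIndex_injective.eq_iff]
  simp only [coconutIndex_inl]
  omega

lemma exists_adj_coconutIndex_lt (v : Fin (p + 1) ⊕ Fin t) (hv : 0 < coconutIndex v) :
    ∃ u, (coconutTree (p + 1) t).Adj v u ∧ coconutIndex u < coconutIndex v := by
  have := coconutIndex_lt v
  obtain ⟨u, hu⟩ := exists_coconutIndex_eq (p := p) (t := t)
    (k := if coconutIndex v ≤ p then coconutIndex v - 1 else p) (by split_ifs <;> omega)
  refine ⟨u, coconutTree_adj_iff.2 ?_, ?_⟩ <;> split_ifs at hu <;> omega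

lemma coconutTree_connected : (coconutTree (p + 1) t).Connected :=
  connected_of_exists_adj_lt (inl 0) coconutIndex fun v hv =>
    exists_adj_coconutIndex_lt v <| Nat.pos_of_ne_zero fun h =>
      hv (coconutIndex_injective (h.trans (coconutIndex_inl 0).symm))

/-- An edge is numbered by its endpoint farther from `v₀`; every vertex but `v₀` has exactly one
neighbour of smaller index, so this numbers the edges `1, …, p + t`. -/
def coconutEdgeIndex (e : Sym2 (Fin (p + 1) ⊕ Fin t)) : ℕ := (e.map coconutIndex).sup

@[simp] lemma coconutEdgeIndex_mk (x y : Fin (p + 1) ⊕ Fin t) :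
    coconutEdgeIndex s(x, y) = max (coconutIndex x) (coconutIndex y) :=
  rfl

lemma bijOn_coconutEdgeIndex :
    BijOn coconutEdgeIndex (coconutTree (p + 1) t).edgeSet (Icc 1 (p + t)) := by
  refine ⟨?_, ?_, ?_⟩
  · intro e
    induction e using Sym2.ind with
    | h x y =>
      have := coconutIndex_lt x
      have := coconutIndex_lt y
      rw [mem_edgeSet, coconutTree_adj_iff, coconutEdgeIndex_mk, mem_Icc]
      omega
  · intro e he e' he'
    induction e using Sym2.ind with
    | h x y =>
    induction e' using Sym2.ind with
    | h x' y' =>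
      rw [mem_edgeSet, coconutTree_adj_iff] at he he'
      simp only [coconutEdgeIndex_mk, Sym2.eq_iff, ← coconutIndex_injective.eq_iff]
      omega
  · intro k hk
    rw [mem_Icc] at hk
    obtain ⟨v, rfl⟩ := exists_coconutIndex_eq (p := p) (t := t) (k := k) (by omega)
    obtain ⟨u, hvu, hu⟩ := exists_adj_coconutIndex_lt v (by omega)
    exact ⟨s(v, u), hvu, by rw [coconutEdgeIndex_mk]; omega⟩

lemma vertexSum_coconutTree_inr (f : Sym2 (Fin (p + 1) ⊕ Fin t) → ℕ) (j : Fin t) :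
    vertexSum (coconutTree (p + 1) t) f (inr j) = f s(inr j, inl (Fin.last p)) :=
  vertexSum_of_neighborSet_eq_singleton (coconutTree_neighborSet_inr j)

lemma vertexSum_coconutTree_inl_zero (hp : 1 ≤ p) (f : Sym2 (Fin (p + 1) ⊕ Fin t) → ℕ) :
    vertexSum (coconutTree (p + 1) t) f (inl 0) = f s(inl 0, inl ⟨1, by omega⟩) :=
  vertexSum_of_neighborSet_eq_singleton (coconutTree_neighborSet_inl_zero hp)

/-- Listed from `v₀`, the path edges get `p, 1, p - 1, 2, …`, so that the vertex sums along
the path alternate between `p` and `p + 1`; the edge to the leaf of index `k > p` gets `k`. -/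
def coconutLabel (p k : ℕ) : ℕ := if p < k then k else if k % 2 = 1 then p - k / 2 else k / 2

lemma bijOn_coconutLabel : BijOn (coconutLabel p) (Icc 1 (p + t)) (Icc 1 (p + t)) := by
  have hmaps : MapsTo (coconutLabel p) (Icc 1 (p + t)) (Icc 1 (p + t)) := by
    intro k hk
    simp only [mem_Icc, coconutLabel] at hk ⊢
    split_ifs <;> omega
  refine ((finite_Icc _ _).injOn_iff_bijOn_of_mapsTo hmaps).1 fun k hk k' hk' h => ?_
  simp only [mem_Icc, coconutLabel] at hk hk' h
  split_ifs at h <;> omega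

def coconutLabeling (p t : ℕ) (e : Sym2 (Fin (p + 1) ⊕ Fin t)) : ℕ :=
  coconutLabel p (coconutEdgeIndex e)

lemma coconutLabeling_mk (x y : Fin (p + 1) ⊕ Fin t) :
    coconutLabeling p t s(x, y) = coconutLabel p (max (coconutIndex x) (coconutIndex y)) :=
  rfl

lemma vertexSum_coconutLabeling (v : Fin (p + 1) ⊕ Fin t) (hv : coconutIndex v ≠ p) :
    vertexSum (coconutTree (p + 1) t) (coconutLabeling p t) v =
      if coconutIndex v < p then p + coconutIndex v % 2 else coconutIndex v := by
  rcases v with ⟨c, hc⟩ | j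
  · simp only [coconutIndex_inl] at hv
    rw [if_pos (by simp only [coconutIndex_inl]; omega)]
    simp only [coconutIndex_inl]
    rcases Nat.eq_zero_or_pos c with rfl | h0
    · rw [show (⟨0, hc⟩ : Fin (p + 1)) = 0 from rfl, vertexSum_coconutTree_inl_zero (by omega),
        coconutLabeling_mk]
      simp only [coconutIndex_inl, Fin.val_zero]
      unfold coconutLabel
      split_ifs <;> omega
    · rw [vertexSum_of_neighborSet_eq_pair (by simp) (coconutTree_neighborSet_inl h0 (by omega)),
        coconutLabeling_mk, coconutLabeling_mk]
      simp only [coconutIndex_inl]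
      unfold coconutLabel
      split_ifs <;> omega
  · rw [if_neg (by simp only [coconutIndex_inr]; omega), vertexSum_coconutTree_inr,
      coconutLabeling_mk]
    simp only [coconutIndex_inl, coconutIndex_inr, Fin.val_last]
    unfold coconutLabel
    split_ifs <;> omega

lemma lt_vertexSum_coconutLabeling_last (hp : 1 ≤ p) (ht : 1 ≤ t) :
    p + t < vertexSum (coconutTree (p + 1) t) (coconutLabeling p t) (inl (Fin.last p)) := by
  have hpos : 0 < coconutLabeling p t s(inl (Fin.last p), inl ⟨p - 1, by omega⟩) := by
    simp only [coconutLabeling_mk, coconutIndex_inl, Fin.val_last]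
    unfold coconutLabel
    split_ifs <;> omega
  have h := lt_vertexSum (w := inr ⟨t - 1, by omega⟩) (coconutTree_adj_iff.2 (by simp; omega))
    (coconutTree_adj_iff.2 (by simp only [coconutIndex_inl, Fin.val_last]; omega)) (by simp) hpos
  simp only [coconutLabeling_mk, coconutIndex_inl, coconutIndex_inr, Fin.val_last] at h
  unfold coconutLabel at h
  split_ifs at h <;> omega

lemma isLocalAntimagic_coconutLabeling (hp : 1 ≤ p) (ht : 1 ≤ t) :
    IsLocalAntimagic (coconutTree (p + 1) t) (coconutLabeling p t) := by
  refine ⟨?_, fun u v huv => ?_⟩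
  · rw [bijOn_coconutEdgeIndex.ncard_eq, Set.ncard_Icc_nat]
    exact bijOn_coconutLabel.comp bijOn_coconutEdgeIndex
  · have hC := lt_vertexSum_coconutLabeling_last hp ht
    have hu := coconutIndex_lt u
    have hv := coconutIndex_lt v
    rw [coconutTree_adj_iff] at huv
    by_cases hup : coconutIndex u = p
    · rw [eq_inl_last_of_coconutIndex_eq hup, vertexSum_coconutLabeling v (by omega)]
      split_ifs <;> omega
    by_cases hvp : coconutIndex v = p
    · rw [eq_inl_last_of_coconutIndex_eq hvp, vertexSum_coconutLabeling u hup]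
      split_ifs <;> omega
    rw [vertexSum_coconutLabeling u hup, vertexSum_coconutLabeling v hvp]
    split_ifs <;> omega

lemma colorCount_coconutLabeling_le (ht : 1 ≤ t) :
    colorCount (coconutTree (p + 1) t) (coconutLabeling p t) ≤ t + 2 := by
  have hsub : range (vertexSum (coconutTree (p + 1) t) (coconutLabeling p t)) ⊆
      insert (vertexSum (coconutTree (p + 1) t) (coconutLabeling p t) (inl (Fin.last p)))
        (Icc p (p + t)) := by
    rintro _ ⟨v, rfl⟩
    by_cases hv : coconutIndex v = p
    · left
      rw [eq_inl_last_of_coconutIndex_eq hv]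
    · right
      have := coconutIndex_lt v
      rw [mem_Icc, vertexSum_coconutLabeling v hv]
      split_ifs <;> omega
  calc _ ≤ _ := ncard_le_ncard hsub ((finite_Icc _ _).insert _)
    _ ≤ (Icc p (p + t)).ncard + 1 := ncard_insert_le _ _
    _ = t + 2 := by rw [Set.ncard_Icc_nat]; omega

lemma add_two_le_colorCount_coconutTree (hp : 1 ≤ p) {f : Sym2 (Fin (p + 1) ⊕ Fin t) → ℕ}
    (hf : IsLocalAntimagic (coconutTree (p + 1) t) f) :
    t + 2 ≤ colorCount (coconutTree (p + 1) t) f := by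
  set σ := vertexSum (coconutTree (p + 1) t) f
  have adj {x y : Fin (p + 1) ⊕ Fin t} := (coconutTree_adj_iff (p := p) (x := x) (y := y)).2
  have hleaf : ∀ j, σ (inr j) = f s(inr j, inl (Fin.last p)) := vertexSum_coconutTree_inr f
  have hleaf_inj : Injective (σ ∘ inr) := fun j j' h => by
    simp only [comp_apply, hleaf] at h
    simpa using hf.1.injOn (adj (by simp; omega)) (adj (by simp; omega)) h
  have hcenter : ∀ j, σ (inr j) < σ (inl (Fin.last p)) := fun j => by
    rw [hleaf, Sym2.eq_swap]
    exact lt_vertexSum (w' := inl ⟨p - 1, by omega⟩) (adj (by simp; omega)) (adj (by simp; omega))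
      (by simp) (hf.pos (adj (by simp; omega)))
  have h0 : σ (inl 0) = f s(inl 0, inl ⟨1, by omega⟩) := vertexSum_coconutTree_inl_zero hp f
  have h0leaf : ∀ j, σ (inl 0) ≠ σ (inr j) := fun j h => by
    rw [h0, hleaf] at h
    simpa using hf.1.injOn (adj (by simp; omega)) (adj (by simp; omega)) h
  by_cases hX : σ (inl 0) = σ (inl (Fin.last p))
  · have hp2 : 2 ≤ p := by
      by_contra hp2
      exact hf.2 (inl 0) (inl (Fin.last p)) (adj (by simp; omega)) hX
    have hY : σ (inl 0) < σ (inl ⟨1, by omega⟩) := by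
      rw [h0, Sym2.eq_swap]
      exact lt_vertexSum (w' := inl ⟨2, by omega⟩) (adj (by simp; omega)) (adj (by simp; omega))
        (by simp) (hf.pos (adj (by simp; omega)))
    have hY' : σ (inl (Fin.last p)) < σ (inl ⟨1, by omega⟩) := hX ▸ hY
    exact add_two_le_colorCount inr hleaf_inj _ _ (fun j => ((hcenter j).trans hY').ne')
      (fun j => (hcenter j).ne') hY'.ne'
  · exact add_two_le_colorCount inr hleaf_inj (inl 0) (inl (Fin.last p)) h0leaf
      (fun j => (hcenter j).ne') hX

theorem chiLA_coconutTree (hp : 1 ≤ p) (ht : 1 ≤ t) : chiLA (coconutTree (p + 1) t) = t + 2 :=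
  IsLeast.csInf_eq ⟨⟨coconutLabeling p t, isLocalAntimagic_coconutLabeling hp ht,
    (colorCount_coconutLabeling_le ht).antisymm
      (add_two_le_colorCount_coconutTree hp (isLocalAntimagic_coconutLabeling hp ht))⟩,
    fun _ ⟨_, hf, hn⟩ => hn ▸ add_two_le_colorCount_coconutTree hp hf⟩

end CoconutTree

theorem exists_graph_chiLA_n_sub_k (n k : ℕ) (h : k + 3 ≤ n) :
    chiLA (coconutTree (k + 2) (n - k - 2)) = n - k ∧
    ∃ (G : SimpleGraph (Fin n)), G.Connected ∧ chiLA G = n - k := by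
  have hchi : chiLA (coconutTree (k + 2) (n - k - 2)) = n - k :=
    (chiLA_coconutTree (p := k + 1) (by omega) (by omega)).trans (by omega)
  let e : Fin (k + 2) ⊕ Fin (n - k - 2) ≃ Fin n := finSumFinEquiv.trans (finCongr (by omega))
  let φ := SimpleGraph.Iso.map e (coconutTree (k + 2) (n - k - 2))
  exact ⟨hchi, _, φ.connected_iff.1 coconutTree_connected, φ.chiLA_eq.symm.trans hchi⟩
end

section
/- Let q ≥ 3 be odd and p ≥ 6 even with p > q. Stacking a 3 × q magic rectangle A on {1,...,3q} above a (p−3) × q magic rectangle B on {3q+1,...,pq} yields a p × q matrix M with constant column sum y = p(pq+1)/2, first three row sums x = q(3q+1)/2, and remaining row sums z = q(pq+3q+1)/2, and these satisfy x < y, x < z, and y ≠ z; hence M gives a local antimagic labeling of K_{p,q} with exactly 3 induced sums. -/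
open scoped BigOperators

/-- `A` is a magic rectangle with entries exactly `{lo, …, hi}` (each used once),
constant row sums and constant column sums. -/
def IsMagicRectangleOn {p q : ℕ} (A : Fin p → Fin q → ℕ) (lo hi : ℕ) : Prop :=
  (Set.range fun ij : Fin p × Fin q => A ij.1 ij.2) = Set.Icc lo hi ∧
  (Function.Injective fun ij : Fin p × Fin q => A ij.1 ij.2) ∧
  (∃ R, ∀ i, ∑ j, A i j = R) ∧ (∃ C, ∀ j, ∑ i, A i j = C)

/-!
An `m × n` magic rectangle on `lo, …, hi` has entry total `m n (lo + hi) / 2`, hence row sums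
`n (lo + hi) / 2` and column sums `m (lo + hi) / 2`. In the stack the labels `1, …, pq` stay
distinct, rows keep their sums and column sums add up, which gives `x`, `y`, `z`. Read as an edge
labeling of `K_{p,q}`, the vertex sums are exactly the row and column sums, so the labeling is
local antimagic as soon as `x, z ≠ y`, and it induces the three sums `x`, `y`, `z`.
-/

open Finset Function

theorem sum_Icc_id_mul_two {lo hi N : ℕ} (h : hi + 1 = lo + N) :
    (∑ k ∈ Icc lo hi, k) * 2 = N * (lo + hi) := by
  rw [← Ico_add_one_right_eq_Icc, h, sum_Ico_eq_sum_range, Nat.add_sub_cancel_left,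
    sum_add_distrib, sum_const, card_range, smul_eq_mul, add_mul, sum_range_id_mul_two]
  obtain _ | N := N
  · simp
  · obtain rfl : hi = lo + N := by omega
    simp only [Nat.add_sub_cancel]
    ring

namespace IsMagicRectangleOn

variable {m n lo hi : ℕ} {A : Fin m → Fin n → ℕ}

theorem range_uncurry (h : IsMagicRectangleOn A lo hi) : Set.range (uncurry A) = Set.Icc lo hi :=
  h.1

theorem mem_Icc (h : IsMagicRectangleOn A lo hi) (x : Fin m × Fin n) :
    uncurry A x ∈ Set.Icc lo hi :=
  h.range_uncurry ▸ Set.mem_range_self x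

theorem sum_entries (h : IsMagicRectangleOn A lo hi) :
    ∑ i, ∑ j, A i j = ∑ k ∈ Icc lo hi, k := by
  have himage : univ.image (uncurry A) = Icc lo hi :=
    coe_injective (by rw [coe_image, coe_univ, Set.image_univ, coe_Icc]; exact h.1)
  rw [← himage, sum_image (g := uncurry A) fun x _ y _ hxy => h.2.1 hxy,
    ← Fintype.sum_prod_type']
  rfl

theorem rowSum_mul_two (h : IsMagicRectangleOn A lo hi) (hN : hi + 1 = lo + m * n) (i : Fin m) :
    (∑ j, A i j) * 2 = n * (lo + hi) := by
  obtain ⟨R, hR⟩ := h.2.2.1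
  have htotal := sum_Icc_id_mul_two hN
  simp only [← h.sum_entries, hR, sum_const, card_univ, Fintype.card_fin, smul_eq_mul] at htotal
  rw [hR]
  refine Nat.eq_of_mul_eq_mul_left i.pos ?_
  linarith [htotal]

theorem colSum_mul_two (h : IsMagicRectangleOn A lo hi) (hN : hi + 1 = lo + m * n) (j : Fin n) :
    (∑ i, A i j) * 2 = m * (lo + hi) := by
  obtain ⟨C, hC⟩ := h.2.2.2
  have htotal := sum_Icc_id_mul_two hN
  simp only [← h.sum_entries, sum_comm (γ := Fin m), hC, sum_const, card_univ, Fintype.card_fin,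
    smul_eq_mul] at htotal
  rw [hC]
  refine Nat.eq_of_mul_eq_mul_left j.pos ?_
  linarith [htotal]

end IsMagicRectangleOn

section VStack

variable {α : Type*} {m n p q : ℕ}

def vstack (h : m + n = p) (A : Fin m → Fin q → α) (B : Fin n → Fin q → α) :
    Fin p → Fin q → α :=
  fun i j => if hi : (i : ℕ) < m then A ⟨i, hi⟩ j
    else B ⟨i - m, by have := i.isLt; omega⟩ j

variable (h : m + n = p) (A : Fin m → Fin q → α) (B : Fin n → Fin q → α)

theorem vstack_of_lt {i : Fin p} (hi : (i : ℕ) < m) (j : Fin q) :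
    vstack h A B i j = A ⟨i, hi⟩ j :=
  dif_pos hi

theorem vstack_of_le {i : Fin p} (hi : m ≤ (i : ℕ)) (j : Fin q) :
    vstack h A B i j = B ⟨i - m, by have := i.isLt; omega⟩ j :=
  dif_neg (Nat.not_lt.2 hi)

theorem vstack_castAdd (a : Fin m) (j : Fin q) :
    vstack h A B (Fin.cast h (Fin.castAdd n a)) j = A a j :=
  vstack_of_lt h A B a.isLt j

theorem vstack_natAdd (b : Fin n) (j : Fin q) :
    vstack h A B (Fin.cast h (Fin.natAdd m b)) j = B b j := by
  rw [vstack_of_le h A B (by simp)]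
  simp

theorem sum_vstack [AddCommMonoid α] (j : Fin q) :
    ∑ i, vstack h A B i j = ∑ i, A i j + ∑ i, B i j := by
  subst h
  rw [Fin.sum_univ_add]
  congr 1 <;> refine sum_congr rfl fun i _ => ?_
  exacts [vstack_castAdd rfl A B i j, vstack_natAdd rfl A B i j]

def vstackIndexEquiv : (Fin m × Fin q) ⊕ (Fin n × Fin q) ≃ Fin p × Fin q :=
  (Equiv.sumProdDistrib _ _ _).symm.trans ((finSumFinEquiv.trans (finCongr h)).prodCongr (.refl _))

theorem uncurry_vstack_comp_vstackIndexEquiv :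
    uncurry (vstack h A B) ∘ vstackIndexEquiv h = Sum.elim (uncurry A) (uncurry B) := by
  funext x
  rcases x with ⟨a, j⟩ | ⟨b, j⟩
  · exact vstack_castAdd h A B a j
  · exact vstack_natAdd h A B b j

theorem range_uncurry_vstack :
    Set.range (uncurry (vstack h A B)) = Set.range (uncurry A) ∪ Set.range (uncurry B) := by
  rw [← Set.Sum.elim_range, ← uncurry_vstack_comp_vstackIndexEquiv, EquivLike.range_comp]

theorem injective_uncurry_vstack (hA : Injective (uncurry A)) (hB : Injective (uncurry B))
    (hAB : ∀ x y, uncurry A x ≠ uncurry B y) : Injective (uncurry (vstack h A B)) := by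
  rw [← (vstackIndexEquiv h).injective_comp, uncurry_vstack_comp_vstackIndexEquiv]
  exact hA.sumElim hB hAB

end VStack

namespace IsMagicRectangleOn

variable {m n p q lo mid hi : ℕ} {A : Fin m → Fin q → ℕ} {B : Fin n → Fin q → ℕ}

theorem injective_uncurry_vstack (h : m + n = p) (hA : IsMagicRectangleOn A lo mid)
    (hB : IsMagicRectangleOn B (mid + 1) hi) : Injective (uncurry (vstack h A B)) :=
  _root_.injective_uncurry_vstack h A B hA.2.1 hB.2.1 fun x y hxy => by
    have hx := hA.mem_Icc x
    have hy := hB.mem_Icc y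
    rw [Set.mem_Icc] at hx hy
    omega

theorem range_uncurry_vstack (h : m + n = p) (hA : IsMagicRectangleOn A lo mid)
    (hB : IsMagicRectangleOn B (mid + 1) hi) (hlo : lo ≤ mid + 1) (hhi : mid ≤ hi) :
    Set.range (uncurry (vstack h A B)) = Set.Icc lo hi := by
  rw [_root_.range_uncurry_vstack, hA.range_uncurry, hB.range_uncurry]
  ext k
  simp only [Set.mem_union, Set.mem_Icc]
  omega

theorem vstack_colSum_mul_two (h : m + n = p) (hA : IsMagicRectangleOn A 1 (m * q))
    (hB : IsMagicRectangleOn B (m * q + 1) (p * q)) (j : Fin q) :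
    (∑ i, vstack h A B i j) * 2 = p * (p * q + 1) := by
  subst h
  rw [sum_vstack, add_mul, hA.colSum_mul_two (by ring) j, hB.colSum_mul_two (by ring) j]
  ring

theorem vstack_rowSum_mul_two_of_lt (h : m + n = p) (hA : IsMagicRectangleOn A 1 (m * q))
    {i : Fin p} (hi : (i : ℕ) < m) :
    (∑ j, vstack h A B i j) * 2 = q * (m * q + 1) := by
  simp only [vstack_of_lt h A B hi]
  rw [hA.rowSum_mul_two (by ring)]
  ring

theorem vstack_rowSum_mul_two_of_le (h : m + n = p)
    (hB : IsMagicRectangleOn B (m * q + 1) (p * q)) {i : Fin p} (hi : m ≤ (i : ℕ)) :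
    (∑ j, vstack h A B i j) * 2 = q * (p * q + m * q + 1) := by
  subst h
  simp only [vstack_of_le rfl A B hi]
  rw [hB.rowSum_mul_two (by ring)]
  ring

end IsMagicRectangleOn

section CompleteBipartite

variable {α β : Type*}

/-- The edge `s(inl i, inr j)` of `K_{α,β}` gets the label `M i j`; non-edges get `0`. -/
def bipartiteLabeling (M : α → β → ℕ) : Sym2 (α ⊕ β) → ℕ :=
  Sym2.lift ⟨fun x y => Sum.elim (fun i => Sum.elim (fun _ => 0) (M i) y)
    (fun j => Sum.elim (fun i => M i j) (fun _ => 0) y) x, by rintro (_ | _) (_ | _) <;> rfl⟩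

theorem completeBipartiteGraph_edgeSet :
    (completeBipartiteGraph α β).edgeSet =
      Set.range fun x : α × β => s(Sum.inl x.1, Sum.inr x.2) := by
  ext e
  induction e using Sym2.ind with
  | _ x y => cases x <;> cases y <;> simp [eq_comm]

theorem completeBipartiteGraph_incidenceSet_inl (i : α) :
    (completeBipartiteGraph α β).incidenceSet (Sum.inl i) =
      Set.range fun j => s(Sum.inl i, Sum.inr j) := by
  ext e
  induction e using Sym2.ind with
  | _ x y => cases x <;> cases y <;> simp [SimpleGraph.incidenceSet, eq_comm]

theorem completeBipartiteGraph_incidenceSet_inr (j : β) :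
    (completeBipartiteGraph α β).incidenceSet (Sum.inr j) =
      Set.range fun i => s(Sum.inl i, Sum.inr j) := by
  ext e
  induction e using Sym2.ind with
  | _ x y => cases x <;> cases y <;> simp [SimpleGraph.incidenceSet, eq_comm]

theorem vertexSum_bipartiteLabeling_inl [Fintype β] (M : α → β → ℕ) (i : α) :
    vertexSum (completeBipartiteGraph α β) (bipartiteLabeling M) (Sum.inl i) = ∑ j, M i j := by
  rw [vertexSum, completeBipartiteGraph_incidenceSet_inl,
    finsum_mem_range fun j j' h => by simpa using h, finsum_eq_sum_of_fintype]
  rfl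

theorem vertexSum_bipartiteLabeling_inr [Fintype α] (M : α → β → ℕ) (j : β) :
    vertexSum (completeBipartiteGraph α β) (bipartiteLabeling M) (Sum.inr j) = ∑ i, M i j := by
  rw [vertexSum, completeBipartiteGraph_incidenceSet_inr,
    finsum_mem_range fun i i' h => by simpa using h, finsum_eq_sum_of_fintype]
  rfl

theorem range_vertexSum_bipartiteLabeling [Fintype α] [Fintype β] (M : α → β → ℕ) :
    Set.range (vertexSum (completeBipartiteGraph α β) (bipartiteLabeling M)) =
      (Set.range fun i => ∑ j, M i j) ∪ Set.range fun j => ∑ i, M i j := by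
  rw [← Set.Sum.elim_range]
  congr
  funext x
  cases x
  exacts [vertexSum_bipartiteLabeling_inl M _, vertexSum_bipartiteLabeling_inr M _]

theorem isLocalAntimagic_bipartiteLabeling [Fintype α] [Fintype β] {M : α → β → ℕ}
    (hinj : Injective (uncurry M))
    (hrange : Set.range (uncurry M) = Set.Icc 1 (Fintype.card α * Fintype.card β))
    (hne : ∀ i j, ∑ j', M i j' ≠ ∑ i', M i' j) :
    IsLocalAntimagic (completeBipartiteGraph α β) (bipartiteLabeling M) := by
  have hedge : Injective fun x : α × β => s(Sum.inl x.1, Sum.inr x.2) := fun x y h => by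
    simpa [Prod.ext_iff] using h
  have hcard :
      (completeBipartiteGraph α β).edgeSet.ncard = Fintype.card α * Fintype.card β := by
    rw [completeBipartiteGraph_edgeSet, Set.ncard_range_of_injective hedge, Nat.card_prod,
      Nat.card_eq_fintype_card, Nat.card_eq_fintype_card]
  refine ⟨?_, ?_⟩
  · rw [hcard, completeBipartiteGraph_edgeSet, ← hrange]
    refine ⟨?_, ?_, ?_⟩
    · rintro _ ⟨x, rfl⟩
      exact ⟨x, rfl⟩
    · rintro _ ⟨x, rfl⟩ _ ⟨y, rfl⟩ hxy
      rw [hinj hxy]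
    · rintro _ ⟨x, rfl⟩
      exact ⟨_, ⟨x, rfl⟩, rfl⟩
  · rintro (i | j) (i' | j') hadj
    · simp at hadj
    · rw [vertexSum_bipartiteLabeling_inl, vertexSum_bipartiteLabeling_inr]
      exact hne i j'
    · rw [vertexSum_bipartiteLabeling_inl, vertexSum_bipartiteLabeling_inr]
      exact (hne i' j).symm
    · simp at hadj

end CompleteBipartite

/-- Reducing modulo `q` forces `q ∣ p`, so `p ≥ 2q`, and then the left side is too large. -/
theorem mul_mul_add_one_ne {p q : ℕ} (hq : 2 ≤ q) (hpq : q < p) :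
    p * (p * q + 1) ≠ q * (p * q + 3 * q + 1) := by
  intro h
  have hdvd : q ∣ p := by
    have h' : q * (p * p) + p = q * (p * q + 3 * q + 1) := by rw [← h]; ring
    exact (Nat.dvd_add_right (dvd_mul_right q _)).mp (h' ▸ dvd_mul_right q _)
  obtain ⟨k, rfl⟩ := hdvd
  have hk : 2 ≤ k := by
    by_contra! hk
    nlinarith
  have hcancel : k * (q * k * q + 1) = q * k * q + 3 * q + 1 :=
    Nat.eq_of_mul_eq_mul_left (show 0 < q by omega) (by rw [← h]; ring)
  nlinarith [Nat.mul_le_mul_left (q * q * k) hk]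

theorem exists_isLocalAntimagic_colorCount_eq_three {α β : Type*} [Fintype α] [Fintype β]
    [Nonempty β] {M : α → β → ℕ} (hinj : Injective (uncurry M))
    (hrange : Set.range (uncurry M) = Set.Icc 1 (Fintype.card α * Fintype.card β))
    {X Y Z : ℕ} (hrow : ∀ i, ∑ j, M i j = X ∨ ∑ j, M i j = Z)
    (hX : ∃ i, ∑ j, M i j = X) (hZ : ∃ i, ∑ j, M i j = Z) (hcol : ∀ j, ∑ i, M i j = Y)
    (hXY : X ≠ Y) (hXZ : X ≠ Z) (hYZ : Y ≠ Z) :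
    ∃ f, IsLocalAntimagic (completeBipartiteGraph α β) f ∧
      colorCount (completeBipartiteGraph α β) f = 3 := by
  refine ⟨bipartiteLabeling M, isLocalAntimagic_bipartiteLabeling hinj hrange fun i j => ?_, ?_⟩
  · rw [hcol]
    rcases hrow i with h | h <;> rw [h]
    exacts [hXY, hYZ.symm]
  · have hrows : (Set.range fun i => ∑ j, M i j) = {X, Z} := by
      refine Set.Subset.antisymm ?_ ?_
      · rintro _ ⟨i, rfl⟩
        exact hrow i
      · rintro _ (rfl | rfl)
        exacts [hX, hZ]
    have hcols : (Set.range fun j => ∑ i, M i j) = {Y} := by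
      rw [funext hcol]
      exact Set.range_const
    rw [colorCount, range_vertexSum_bipartiteLabeling, hrows, hcols, Set.union_singleton,
      Set.ncard_eq_three]
    exact ⟨Y, X, Z, hXY.symm, hYZ, hXZ, rfl⟩

theorem Kpq_stacked_construction (p q : ℕ) (hq : 3 ≤ q)
    (hp : 6 ≤ p) (hpq : q < p)
    (A : Fin 3 → Fin q → ℕ) (hA : IsMagicRectangleOn A 1 (3 * q))
    (B : Fin (p - 3) → Fin q → ℕ) (hB : IsMagicRectangleOn B (3 * q + 1) (p * q))
    (M : Fin p → Fin q → ℕ)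
    (hM : ∀ i j, M i j = if h : (i : ℕ) < 3 then A ⟨i, h⟩ j
      else B ⟨(i : ℕ) - 3, by have := i.isLt; omega⟩ j) :
    (∀ j, ∑ i, M i j = p * (p * q + 1) / 2) ∧
    (∀ i : Fin p, (i : ℕ) < 3 → ∑ j, M i j = q * (3 * q + 1) / 2) ∧
    (∀ i : Fin p, 3 ≤ (i : ℕ) → ∑ j, M i j = q * (p * q + 3 * q + 1) / 2) ∧
    q * (3 * q + 1) / 2 < p * (p * q + 1) / 2 ∧
    q * (3 * q + 1) / 2 < q * (p * q + 3 * q + 1) / 2 ∧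
    p * (p * q + 1) / 2 ≠ q * (p * q + 3 * q + 1) / 2 ∧
    ∃ f, IsLocalAntimagic (completeBipartiteGraph (Fin p) (Fin q)) f ∧
      colorCount (completeBipartiteGraph (Fin p) (Fin q)) f = 3 := by
  have h3 : 3 + (p - 3) = p := by omega
  have : NeZero q := ⟨by omega⟩
  obtain rfl : M = vstack h3 A B := funext fun i => funext (hM i)
  have half {s t : ℕ} (h : s * 2 = t) : s = t / 2 :=
    (Nat.div_eq_of_eq_mul_left two_pos h.symm).symm
  have hcol (j : Fin q) := half (hA.vstack_colSum_mul_two h3 hB j)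
  have hrowX (i : Fin p) (hi : (i : ℕ) < 3) :=
    half (hA.vstack_rowSum_mul_two_of_lt (B := B) h3 hi)
  have hrowZ (i : Fin p) (hi : 3 ≤ (i : ℕ)) :=
    half (hB.vstack_rowSum_mul_two_of_le (A := A) h3 hi)
  have hy2 : 2 ∣ p * (p * q + 1) :=
    Dvd.intro_left _ (hA.vstack_colSum_mul_two h3 hB ⟨0, by omega⟩)
  have hz2 : 2 ∣ q * (p * q + 3 * q + 1) :=
    Dvd.intro_left _ (hB.vstack_rowSum_mul_two_of_le (A := A) h3 (i := ⟨3, by omega⟩) le_rfl)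
  have hxy : q * (3 * q + 1) < p * (p * q + 1) := by nlinarith [Nat.mul_le_mul hp hpq.le]
  have hxz : q * (3 * q + 1) < q * (p * q + 3 * q + 1) := by
    nlinarith [Nat.mul_pos (by omega : 0 < p) (by omega : 0 < q)]
  have hXY := Nat.div_lt_div_of_lt_of_dvd hy2 hxy
  have hXZ := Nat.div_lt_div_of_lt_of_dvd hz2 hxz
  have hYZ := (Nat.div_left_inj hy2 hz2).not.mpr (mul_mul_add_one_ne (by omega) hpq)
  refine ⟨hcol, hrowX, hrowZ, hXY, hXZ, hYZ, exists_isLocalAntimagic_colorCount_eq_three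
    (hA.injective_uncurry_vstack h3 hB) ?_
    (fun i => (lt_or_ge (i : ℕ) 3).imp (hrowX i) (hrowZ i))
    ⟨⟨0, by omega⟩, hrowX _ (by simp)⟩ ⟨⟨3, by omega⟩, hrowZ _ le_rfl⟩ hcol
    hXY.ne hXZ.ne hYZ⟩
  rw [Fintype.card_fin, Fintype.card_fin]
  exact hA.range_uncurry_vstack h3 hB (by omega) (by nlinarith)
end
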